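/- arXiv:math-ph/9903032 — 2 statements merged into one kernel-verified Lean document; each statement's English description precedes it below -/
import Mathlib

section
/- Let n > 1, l > -1 with 2l+3-n > 0. If ρ is nonnegative, spherically symmetric on ℝ³ with ∫ρ = M and ‖ρ‖_{n,l} := (∫ ρ^{1+1/n}|x|^{-2l/n})^{n/(n+1)} < ∞, and m(r) = ∫_{|y|≤r}ρ, then ∫_0^R m(r)²/r² dr ≤ C M^{1-1/n} ‖ρ‖_{n,l}^{1+1/n} R^{(2l+3-n)/n} for a constant C = C(n,l). -/
/-! Interpolation gives `m(r)² ≤ M^{1-1/n} m(r)^{1+1/n}`, and Hölder's inequality against the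
weight `|x|^{2l}`, whose integral over the ball of radius `r` is `c r^{2l+3}` by scaling, gives
`m(r)^{1+1/n} ≤ ‖ρ‖_{n,l}^{1+1/n} (c r^{2l+3})^{1/n}`. Hence `m(r)²/r² ≲ r^β` with
`β = (2l+3)/n - 2`, and `β > -1` is exactly the condition `2l+3-n > 0` making `r^β` integrable
on `(0, R]`. -/

open Real MeasureTheory

noncomputable section

/-- `ℝ³` as a Euclidean space. -/
abbrev E3 := EuclideanSpace ℝ (Fin 3)

/-- The mass function `m_ρ(r) = ∫_{|y| ≤ r} ρ(y) dy`. -/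
def mfun (ρ : E3 → ℝ) (r : ℝ) : ℝ := ∫ y in Metric.closedBall (0 : E3) r, ρ y

open Set Metric Module
open scoped ENNReal

theorem rpow_lintegral_ofReal_le_weighted {α : Type*} [MeasurableSpace α] {μ : Measure α}
    {p : ℝ} (hp : 1 < p) {f w : α → ℝ} (hf : AEMeasurable f μ) (hw : AEMeasurable w μ)
    (hf0 : 0 ≤ᵐ[μ] f) (hw0 : ∀ᵐ x ∂μ, 0 < w x) :
    (∫⁻ x, ENNReal.ofReal (f x) ∂μ) ^ p
      ≤ (∫⁻ x, ENNReal.ofReal (f x ^ p * w x ^ (1 - p)) ∂μ)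
        * (∫⁻ x, ENNReal.ofReal (w x) ∂μ) ^ (p - 1) := by
  have hp0 : 0 < p := by linarith
  set q := p.conjExponent
  have hpq : p.HolderConjugate q := .conjExponent hp
  have hq : 1 / q = (p - 1) / p := by
    rw [one_div, ← sub_eq_of_eq_add' hpq.inv_add_inv_eq_one.symm]; field_simp
  set F : α → ℝ≥0∞ := fun x => ENNReal.ofReal (f x * w x ^ (-(1 / q)))
  set G : α → ℝ≥0∞ := fun x => ENNReal.ofReal (w x ^ (1 / q))
  have hFG : ∀ᵐ x ∂μ, ENNReal.ofReal (f x) = (F * G) x := by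
    filter_upwards [hw0] with x hx
    simp only [F, G, Pi.mul_apply]
    rw [← ENNReal.ofReal_mul' (rpow_nonneg hx.le _), mul_assoc, ← rpow_add hx, neg_add_cancel,
      rpow_zero, mul_one]
  have hF : ∀ᵐ x ∂μ, F x ^ p = ENNReal.ofReal (f x ^ p * w x ^ (1 - p)) := by
    filter_upwards [hw0, hf0] with x hx hfx
    rw [ENNReal.ofReal_rpow_of_nonneg (mul_nonneg hfx (rpow_nonneg hx.le _)) hp0.le,
      mul_rpow hfx (rpow_nonneg hx.le _), ← rpow_mul hx.le, hq]
    congr 3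
    field_simp
    ring
  have hG : ∀ᵐ x ∂μ, G x ^ q = ENNReal.ofReal (w x) := by
    filter_upwards [hw0] with x hx
    rw [ENNReal.ofReal_rpow_of_nonneg (rpow_nonneg hx.le _) hpq.symm.nonneg, ← rpow_mul hx.le,
      one_div_mul_cancel hpq.symm.ne_zero, rpow_one]
  have holder := ENNReal.lintegral_mul_le_Lp_mul_Lq μ hpq (f := F) (g := G) (by fun_prop)
    (by fun_prop)
  rw [← lintegral_congr_ae hFG, lintegral_congr_ae hF, lintegral_congr_ae hG] at holder
  calc (∫⁻ x, ENNReal.ofReal (f x) ∂μ) ^ p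
      ≤ ((∫⁻ x, ENNReal.ofReal (f x ^ p * w x ^ (1 - p)) ∂μ) ^ (1 / p)
          * (∫⁻ x, ENNReal.ofReal (w x) ∂μ) ^ (1 / q)) ^ p := ENNReal.rpow_le_rpow holder hp0.le
    _ = _ := by
      rw [ENNReal.mul_rpow_of_nonneg _ _ hp0.le, ← ENNReal.rpow_mul, ← ENNReal.rpow_mul, hq,
        one_div_mul_cancel hp0.ne', ENNReal.rpow_one, div_mul_cancel₀ _ hp0.ne']

section NormRpowOnBalls

variable {E : Type*} [NormedAddCommGroup E] [NormedSpace ℝ E] [FiniteDimensional ℝ E]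
  [MeasurableSpace E] [BorelSpace E] (μ : Measure E) [μ.IsAddHaarMeasure]

theorem setIntegral_closedBall_norm_rpow (s : ℝ) {r : ℝ} (hr : 0 < r) :
    ∫ x in closedBall (0 : E) r, ‖x‖ ^ s ∂μ
      = r ^ (s + finrank ℝ E) * ∫ x in closedBall (0 : E) 1, ‖x‖ ^ s ∂μ := by
  have hscale := Measure.setIntegral_comp_smul_of_pos μ (fun x : E => ‖x‖ ^ s) (closedBall 0 1) hr
  simp only [norm_smul, Real.norm_of_nonneg hr.le, smul_unitClosedBall_of_nonneg hr.le,
    smul_eq_mul] at hscale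
  simp_rw [mul_rpow hr.le (norm_nonneg _)] at hscale
  rw [integral_const_mul, eq_inv_mul_iff_mul_eq₀ (by positivity)] at hscale
  rw [← hscale, ← mul_assoc, rpow_add hr, rpow_natCast, mul_comm (r ^ s)]

variable [Nontrivial E]

theorem integrableOn_closedBall_norm_rpow {s : ℝ} (hs : -(finrank ℝ E : ℝ) < s) (r : ℝ) :
    IntegrableOn (fun x : E => ‖x‖ ^ s) (closedBall 0 r) μ := by
  refine (locallyIntegrable_of_norm_le_rpow (C := 1) (α := -s) finrank_pos (by linarith)
    (ae_of_all _ fun x => ?_) (measurable_norm.pow_const s).aestronglyMeasurable)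
    |>.integrableOn_isCompact (isCompact_closedBall 0 r)
  rw [neg_neg, one_mul, Real.norm_of_nonneg (rpow_nonneg (norm_nonneg x) s)]

theorem setIntegral_unitClosedBall_norm_rpow_pos {s : ℝ} (hs : -(finrank ℝ E : ℝ) < s) :
    0 < ∫ x in closedBall (0 : E) 1, ‖x‖ ^ s ∂μ := by
  rw [setIntegral_pos_iff_support_of_nonneg_ae
    (ae_of_all _ fun x => rpow_nonneg (norm_nonneg x) s) (integrableOn_closedBall_norm_rpow μ hs 1)]
  have hsub : closedBall (0 : E) 1 \ {0}
      ⊆ Function.support (fun x : E => ‖x‖ ^ s) ∩ closedBall 0 1 :=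
    fun x hx => ⟨(rpow_pos_of_pos (norm_pos_iff.2 hx.2) s).ne', hx.1⟩
  calc 0 < μ (closedBall (0 : E) 1) := measure_closedBall_pos μ 0 one_pos
    _ = μ (closedBall (0 : E) 1 \ {0}) := (measure_sdiff_null (measure_singleton 0)).symm
    _ ≤ _ := measure_mono hsub

theorem lintegral_closedBall_norm_rpow {s : ℝ} (hs : -(finrank ℝ E : ℝ) < s) {r : ℝ} (hr : 0 < r) :
    ∫⁻ x in closedBall (0 : E) r, ENNReal.ofReal (‖x‖ ^ s) ∂μ
      = ENNReal.ofReal (r ^ (s + finrank ℝ E) * ∫ x in closedBall (0 : E) 1, ‖x‖ ^ s ∂μ) := by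
  rw [← setIntegral_closedBall_norm_rpow μ s hr, ofReal_integral_eq_lintegral_ofReal
    (integrableOn_closedBall_norm_rpow μ hs r) (ae_of_all _ fun x => rpow_nonneg (norm_nonneg x) s)]

theorem rpow_setLIntegral_closedBall_le {p s : ℝ} (hp : 1 < p) (hs : -(finrank ℝ E : ℝ) < s)
    {ρ : E → ℝ} (hρ : Measurable ρ) (hρ0 : ∀ x, 0 ≤ ρ x) {r : ℝ} (hr : 0 < r) :
    (∫⁻ x in closedBall (0 : E) r, ENNReal.ofReal (ρ x) ∂μ) ^ p
      ≤ (∫⁻ x, ENNReal.ofReal (ρ x ^ p * ‖x‖ ^ (s * (1 - p))) ∂μ)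
        * ENNReal.ofReal (r ^ (s + finrank ℝ E) * ∫ x in closedBall (0 : E) 1, ‖x‖ ^ s ∂μ)
          ^ (p - 1) := by
  have hw0 : ∀ᵐ x ∂μ.restrict (closedBall 0 r), 0 < ‖x‖ ^ s := by
    refine ae_restrict_of_ae ?_
    filter_upwards [compl_mem_ae_iff.2 (measure_singleton (0 : E))] with x hx
    exact rpow_pos_of_pos (norm_pos_iff.2 hx) s
  calc _ ≤ (∫⁻ x in closedBall (0 : E) r, ENNReal.ofReal (ρ x ^ p * (‖x‖ ^ s) ^ (1 - p)) ∂μ)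
        * (∫⁻ x in closedBall (0 : E) r, ENNReal.ofReal (‖x‖ ^ s) ∂μ) ^ (p - 1) :=
        rpow_lintegral_ofReal_le_weighted hp hρ.aemeasurable
          (measurable_norm.pow_const s).aemeasurable (ae_of_all _ hρ0) hw0
    _ ≤ _ := by
      simp_rw [← rpow_mul (norm_nonneg _)]
      rw [lintegral_closedBall_norm_rpow μ hs hr]
      gcongr
      exact Measure.restrict_le_self

end NormRpowOnBalls

theorem sq_le_rpow_mul_rpow_of_le {a b u v : ℝ} (ha : 0 ≤ a) (hab : a ≤ b) (hu : 0 ≤ u)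
    (huv : u + v = 2) : a ^ 2 ≤ b ^ u * a ^ v := by
  calc a ^ 2 = a ^ u * a ^ v := by
        rw [← rpow_add' ha (by rw [huv]; norm_num), huv, rpow_two]
    _ ≤ b ^ u * a ^ v := by gcongr

theorem lintegral_Ioc_ofReal_mul_rpow {K β : ℝ} (hK : 0 ≤ K) (hβ : -1 < β) {R : ℝ} (hR : 0 ≤ R) :
    ∫⁻ r in Ioc 0 R, ENNReal.ofReal (K * r ^ β) = ENNReal.ofReal (K * (R ^ (β + 1) / (β + 1))) := by
  have hint : IntegrableOn (fun r : ℝ => K * r ^ β) (Ioc 0 R) :=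
    ((intervalIntegrable_iff_integrableOn_Ioc_of_le hR).mp
      (intervalIntegral.intervalIntegrable_rpow' hβ)).const_mul K
  have hnonneg : 0 ≤ᵐ[volume.restrict (Ioc 0 R)] fun r : ℝ => K * r ^ β := by
    filter_upwards [ae_restrict_mem measurableSet_Ioc] with r hr
    exact mul_nonneg hK (rpow_nonneg hr.1.le _)
  rw [← ofReal_integral_eq_lintegral_ofReal hint hnonneg, integral_const_mul,
    ← intervalIntegral.integral_of_le hR, integral_rpow (Or.inl hβ),
    zero_rpow (by linarith), sub_zero]

theorem mfun_rpow_le {n l : ℝ} (hn : 0 < n) (hl : -1 < l) {ρ : E3 → ℝ} (hρ : Measurable ρ)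
    (hρ0 : ∀ x, 0 ≤ ρ x) (hint : Integrable ρ)
    (hA : Integrable fun x => ρ x ^ (1 + 1/n) * ‖x‖ ^ (-(2*l/n))) {r : ℝ} (hr : 0 < r) :
    mfun ρ r ^ (1 + 1/n)
      ≤ (∫ x, ρ x ^ (1 + 1/n) * ‖x‖ ^ (-(2*l/n)))
        * (r ^ (2*l + 3) * ∫ x in closedBall (0 : E3) 1, ‖x‖ ^ (2*l)) ^ (1/n) := by
  have hd : (finrank ℝ E3 : ℝ) = 3 := by rw [finrank_euclideanSpace_fin]; norm_num
  have hA0 : ∀ x : E3, 0 ≤ ρ x ^ (1 + 1/n) * ‖x‖ ^ (-(2*l/n)) := fun x =>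
    mul_nonneg (rpow_nonneg (hρ0 x) _) (rpow_nonneg (norm_nonneg x) _)
  have hc0 : 0 ≤ ∫ x in closedBall (0 : E3) 1, ‖x‖ ^ (2*l) :=
    integral_nonneg fun x => rpow_nonneg (norm_nonneg x) _
  have hholder := rpow_setLIntegral_closedBall_le volume (p := 1 + 1/n) (s := 2*l)
    (by simp [hn]) (by rw [hd]; linarith) hρ hρ0 hr
  have hexp : 2*l * (1 - (1 + 1/n)) = -(2*l/n) := by ring
  rw [hd, hexp, add_sub_cancel_left,
    ← ofReal_integral_eq_lintegral_ofReal hint.restrict (ae_of_all _ hρ0),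
    ← ofReal_integral_eq_lintegral_ofReal hA (ae_of_all _ hA0),
    ENNReal.ofReal_rpow_of_nonneg (integral_nonneg hρ0) (by positivity),
    ENNReal.ofReal_rpow_of_nonneg (by positivity) (by positivity),
    ← ENNReal.ofReal_mul (integral_nonneg hA0),
    ENNReal.ofReal_le_ofReal_iff (mul_nonneg (integral_nonneg hA0) (by positivity))] at hholder
  exact hholder

theorem mfun_sq_div_sq_le {n l : ℝ} (hn : 1 < n) (hl : -1 < l) {ρ : E3 → ℝ} (hρ : Measurable ρ)
    (hρ0 : ∀ x, 0 ≤ ρ x) (hint : Integrable ρ)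
    (hA : Integrable fun x => ρ x ^ (1 + 1/n) * ‖x‖ ^ (-(2*l/n))) {r : ℝ} (hr : 0 < r) :
    mfun ρ r ^ 2 / r ^ 2
      ≤ (∫ x, ρ x) ^ (1 - 1/n) * (∫ x, ρ x ^ (1 + 1/n) * ‖x‖ ^ (-(2*l/n)))
        * (∫ x in closedBall (0 : E3) 1, ‖x‖ ^ (2*l)) ^ (1/n) * r ^ ((2*l + 3)/n - 2) := by
  have hm0 : 0 ≤ mfun ρ r := setIntegral_nonneg measurableSet_closedBall fun x _ => hρ0 x
  have hmM : mfun ρ r ≤ ∫ x, ρ x := setIntegral_le_integral hint (ae_of_all _ hρ0)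
  have hu : 0 ≤ 1 - 1/n := by
    rw [sub_nonneg, div_le_one (by linarith)]; exact hn.le
  calc mfun ρ r ^ 2 / r ^ 2
      ≤ (∫ x, ρ x) ^ (1 - 1/n) * mfun ρ r ^ (1 + 1/n) / r ^ 2 := by
        gcongr; exact sq_le_rpow_mul_rpow_of_le hm0 hmM hu (by ring)
    _ ≤ (∫ x, ρ x) ^ (1 - 1/n) * ((∫ x, ρ x ^ (1 + 1/n) * ‖x‖ ^ (-(2*l/n)))
          * (r ^ (2*l + 3) * ∫ x in closedBall (0 : E3) 1, ‖x‖ ^ (2*l)) ^ (1/n)) / r ^ 2 := by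
        gcongr
        · exact rpow_nonneg (integral_nonneg hρ0) _
        · exact mfun_rpow_le (by linarith) hl hρ hρ0 hint hA hr
    _ = _ := by
        rw [mul_rpow (by positivity) (integral_nonneg fun x => rpow_nonneg (norm_nonneg x) _),
          ← rpow_mul hr.le, rpow_sub hr, rpow_two, mul_one_div]
        ring

theorem camm_mass_quotient_integral_interpolation (n l : ℝ) (hn : 1 < n) (hl : -1 < l)
    (hnl : 0 < 2*l + 3 - n) :
    ∃ C : ℝ, 0 < C ∧ ∀ (ρ : E3 → ℝ) (M : ℝ), Measurable ρ → (∀ x, 0 ≤ ρ x) →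
      (∀ x y : E3, ‖x‖ = ‖y‖ → ρ x = ρ y) →
      Integrable ρ → (∫ x, ρ x) = M →
      Integrable (fun x => ρ x ^ (1 + 1/n) * ‖x‖ ^ (-(2*l/n))) →
      ∀ R : ℝ, 0 < R →
        ∫⁻ r in Set.Ioc (0:ℝ) R, ENNReal.ofReal (mfun ρ r ^ 2 / r ^ 2)
          ≤ ENNReal.ofReal
              (C * M ^ (1 - 1/n)
                * ((∫ x, ρ x ^ (1 + 1/n) * ‖x‖ ^ (-(2*l/n))) ^ (n/(n+1))) ^ (1 + 1/n)
                * R ^ ((2*l + 3 - n)/n)) := by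
  have hn0 : 0 < n := by linarith
  set c := ∫ x in closedBall (0 : E3) 1, ‖x‖ ^ (2*l)
  have hc : 0 < c := setIntegral_unitClosedBall_norm_rpow_pos volume
    (by rw [finrank_euclideanSpace_fin]; push_cast; linarith)
  refine ⟨c ^ (1/n) * (n / (2*l + 3 - n)), by positivity, ?_⟩
  rintro ρ M hρ hρ0 - hint rfl hA R hR
  set A := ∫ x, ρ x ^ (1 + 1/n) * ‖x‖ ^ (-(2*l/n))
  have hA0 : 0 ≤ A := integral_nonneg fun x =>
    mul_nonneg (rpow_nonneg (hρ0 x) _) (rpow_nonneg (norm_nonneg x) _)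
  have hM0 : 0 ≤ ∫ x, ρ x := integral_nonneg hρ0
  have hK : 0 ≤ (∫ x, ρ x) ^ (1 - 1/n) * A * c ^ (1/n) := by positivity
  have hβ : -1 < (2*l + 3)/n - 2 := by
    rw [lt_sub_iff_add_lt, lt_div_iff₀ hn0]; linarith
  calc _ ≤ ∫⁻ r in Ioc 0 R,
          ENNReal.ofReal ((∫ x, ρ x) ^ (1 - 1/n) * A * c ^ (1/n) * r ^ ((2*l + 3)/n - 2)) :=
        setLIntegral_mono' measurableSet_Ioc fun r hr =>
          ENNReal.ofReal_le_ofReal (mfun_sq_div_sq_le hn hl hρ hρ0 hint hA hr.1)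
    _ = _ := by
        rw [lintegral_Ioc_ofReal_mul_rpow hK hβ hR.le, ← rpow_mul hA0,
          show n/(n+1) * (1 + 1/n) = 1 by field_simp, rpow_one,
          show (2*l + 3)/n - 2 + 1 = (2*l + 3 - n)/n by field_simp; ring]
        congr 1
        field_simp
end
end

section
/- Let Q : [0,∞) → [0,∞) be convex with Q(0) = 0, Q'(0) = 0, Q ∈ C²((0,∞)) with Q'' > 0. Fix constants E₀ < 0, γ ≥ 0, and let E, L : ℝ⁶ → ℝ be measurable with L ≥ 0. Define f₀(x,v) = (Q')^{-1}((E₀ − E(x,v) − γL(x,v))₊) · L(x,v)^l (interpreted as 0 when E₀ − E − γL ≤ 0). Then for any measurable f ≥ 0 and almost every (x,v): Q(L^{-l}f)L^l − Q(L^{-l}f₀)L^l + (E + γL − E₀)(f − f₀) ≥ 0. -/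
open Real MeasureTheory

noncomputable section

/-- `ℝ³ × ℝ³`, phase space. -/
abbrev E6 := (EuclideanSpace ℝ (Fin 3)) × (EuclideanSpace ℝ (Fin 3))


private lemma tangent_line_le {Q Qd : ℝ → ℝ}
    (hconv : ConvexOn ℝ (Set.Ici 0) Q)
    (hderiv : ∀ s : ℝ, 0 < s → HasDerivAt Q (Qd s) s)
    {s u : ℝ} (hs : 0 < s) (hu : 0 ≤ u) :
    Q s + Qd s * (u - s) ≤ Q u := by
  rcases lt_trichotomy u s with h | h | h
  · have hsl := hconv.slope_le_of_hasDerivAt (Set.mem_Ici.2 hu)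
      (Set.mem_Ici.2 hs.le) h (hderiv s hs)
    rw [slope_def_field, div_le_iff₀ (by linarith)] at hsl
    nlinarith
  · simp [h]
  · have hsl := hconv.le_slope_of_hasDerivAt (Set.mem_Ici.2 hs.le)
      (Set.mem_Ici.2 hu) h (hderiv s hs)
    rw [slope_def_field, le_div_iff₀ (by linarith)] at hsl
    nlinarith

theorem camm_pointwise_expansion_nonneg (l : ℝ) (hl : -1 < l)
    (Q Qd Qdd : ℝ → ℝ)
    (hQnn : ∀ s : ℝ, 0 ≤ s → 0 ≤ Q s)
    (hQ0 : Q 0 = 0) (hQd0 : Qd 0 = 0)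
    (hconv : ConvexOn ℝ (Set.Ici 0) Q)
    (hderiv : ∀ s : ℝ, 0 < s → HasDerivAt Q (Qd s) s)
    (hderiv2 : ∀ s : ℝ, 0 < s → HasDerivAt Qd (Qdd s) s)
    (hQddpos : ∀ s : ℝ, 0 < s → 0 < Qdd s)
    (E₀ γ : ℝ) (hE₀ : E₀ < 0) (hγ : 0 ≤ γ)
    (E L : E6 → ℝ) (hEmeas : Measurable E) (hLmeas : Measurable L)
    (hL : ∀ z, 0 ≤ L z)
    (f₀ f : E6 → ℝ) (hf : ∀ z, 0 ≤ f z) (hf₀meas : Measurable f₀) (hfmeas : Measurable f)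
    -- `f₀ = (Q')⁻¹((E₀ - E - γL)₊) · L^l`, interpreted as `0` when `E₀ - E - γL ≤ 0`:
    (hf₀zero : ∀ z, E₀ - E z - γ * L z ≤ 0 → f₀ z = 0)
    (hf₀pos : ∀ z, 0 < E₀ - E z - γ * L z →
      ∃ s : ℝ, 0 ≤ s ∧ Qd s = E₀ - E z - γ * L z ∧ f₀ z = L z ^ l * s) :
    ∀ z : E6, 0 < L z →
      0 ≤ Q (L z ^ (-l) * f z) * L z ^ l - Q (L z ^ (-l) * f₀ z) * L z ^ l
          + (E z + γ * L z - E₀) * (f z - f₀ z) := by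
  intro z hLz
  have ha : 0 < L z ^ l := Real.rpow_pos_of_pos hLz l
  have hneg : L z ^ (-l) = (L z ^ l)⁻¹ := Real.rpow_neg (hL z) l |>.trans rfl
  by_cases h : E₀ - E z - γ * L z ≤ 0
  · have h0 : f₀ z = 0 := hf₀zero z h
    have hQu : 0 ≤ Q (L z ^ (-l) * f z) :=
      hQnn _ (mul_nonneg (Real.rpow_nonneg (hL z) _) (hf z))
    rw [h0]
    simp only [mul_zero, sub_zero, hQ0, zero_mul]
    have : 0 ≤ E z + γ * L z - E₀ := by linarith
    have := mul_nonneg this (hf z)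
    nlinarith
  · push_neg at h
    obtain ⟨s, hs0, hQds, hf₀z⟩ := hf₀pos z h
    have hspos : 0 < s := by
      rcases hs0.lt_or_eq with h' | h'
      · exact h'
      · exfalso; rw [← h', hQd0] at hQds; linarith
    have hinv : L z ^ (-l) * f₀ z = s := by
      rw [hf₀z, hneg]
      field_simp
    set u : ℝ := L z ^ (-l) * f z with hu_def
    have hu : 0 ≤ u := mul_nonneg (Real.rpow_nonneg (hL z) _) (hf z)
    have hfz : f z = L z ^ l * u := by
      rw [hu_def, hneg]; field_simp
    have htan := tangent_line_le hconv hderiv hspos hu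
    have hβ : E z + γ * L z - E₀ = -Qd s := by linarith
    rw [hinv, hfz, hf₀z, hβ]
    have : L z ^ l * (Q u - Q s - Qd s * (u - s)) =
        Q u * L z ^ l - Q s * L z ^ l + -Qd s * (L z ^ l * u - L z ^ l * s) := by ring
    nlinarith [mul_nonneg ha.le (by linarith : (0:ℝ) ≤ Q u - Q s - Qd s * (u - s))]
end
end
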